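/- arXiv:1606.06475 — 5 statements merged into one kernel-verified Lean document; each statement's English description precedes it below -/
import Mathlib

section
/- Let ε > 0 and let f(t) = A(t)e^{iφ(t)} be a function of intrinsic-mode type with accuracy ε. Then the anti-holomorphic part of f satisfies ‖P₋f‖²_{L²(0,2π)} ≤ (8π²/‖A‖²_{L²(0,2π)}) · (‖A′‖²_{L^∞} + ε²‖A‖²_{L^∞}) / (inf_{0<t<2π} φ′(t)) · ‖f‖²_{L²(0,2π)}. -/
/-!
For `n ≥ 1` the phase `φ t + n t` of `f(t) e^{int}` has derivative `φ' + n ≥ δ + n`, where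
`δ = inf φ'`, so one integration by parts (non-stationary phase, the boundary terms cancel by
periodicity) gives `|f̂(-n)| ≤ (‖A'‖_∞ + ε ‖A‖_∞) / (δ + n)`. Summing squares against the
telescoping bound `1 / (δ + n)² ≤ 1 / (δ + n - 1) - 1 / (δ + n)` gives
`∑_{n ≥ 1} |f̂(-n)|² ≤ (‖A'‖_∞ + ε ‖A‖_∞)² / δ`, and `‖f‖_{L²} = ‖A‖_{L²}` since `|f| = A`.
-/

open Real MeasureTheory

/-- The `n`-th Fourier coefficient of a `2π`-periodic function,
`f̂(n) = (1/2π) ∫₀^{2π} f(t) e^{-int} dt`. -/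
noncomputable def fourierCoef (f : ℝ → ℂ) (n : ℤ) : ℂ :=
  (1 / (2 * (Real.pi : ℂ))) * ∫ t in (0:ℝ)..(2 * Real.pi), f t * Complex.exp (-(Complex.I * n * t))

open Complex (I)
open Set

theorem periodic_deriv_of_add_period_eq {f : ℝ → ℝ} {c d : ℝ} (h : ∀ x, f (x + c) = f x + d) :
    Function.Periodic (deriv f) c := fun x => by
  rw [← deriv_comp_add_const, funext h, deriv_add_const]

theorem Function.Periodic.deriv {f : ℝ → ℝ} {c : ℝ} (hf : Function.Periodic f c) :
    Function.Periodic (deriv f) c :=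
  periodic_deriv_of_add_period_eq (d := 0) (by simpa using hf)

theorem Function.Periodic.abs_le_ciSup_abs {f : ℝ → ℝ} {c : ℝ} (hf : Function.Periodic f c)
    (hc : c ≠ 0) (hcont : Continuous f) (t : ℝ) : |f t| ≤ ⨆ s, |f s| :=
  le_ciSup ((hf.comp abs).isBounded_of_continuous hc (continuous_abs.comp hcont)).bddAbove t

theorem Real.bddBelow_range_of_iInf_pos {ι : Type*} {g : ι → ℝ} (h : 0 < ⨅ i, g i) :
    BddBelow (range g) := by
  by_contra hg
  rw [Real.iInf_of_not_bddBelow hg] at h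
  exact h.false

theorem ciInf_le_csInf_image {α β : Type*} [ConditionallyCompleteLattice β] {g : α → β}
    {s : Set α} (hg : BddBelow (range g)) (hs : s.Nonempty) : ⨅ i, g i ≤ sInf (g '' s) :=
  le_csInf (hs.image g) (forall_mem_image.2 fun t _ => ciInf_le hg t)

theorem csInf_image_le_of_mem_closure {α β : Type*} [TopologicalSpace α]
    [ConditionallyCompleteLinearOrder β] [TopologicalSpace β] [OrderTopology β]
    {g : α → β} {s : Set α} (hg : Continuous g) (hs : BddBelow (g '' s)) {x : α}
    (hx : x ∈ closure s) : sInf (g '' s) ≤ g x := by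
  have hne : (g '' s).Nonempty := (closure_nonempty_iff.mp ⟨x, hx⟩).image g
  have hlower := (isGLB_csInf hne hs).1
  rw [← lowerBounds_closure] at hlower
  exact hlower (image_closure_subset_closure_image hg ⟨x, hx, rfl⟩)

theorem Continuous.sInf_image_Ioo_pos_and_le {g : ℝ → ℝ} (hg : Continuous g)
    (h : 0 < ⨅ t, g t) {a b : ℝ} (hab : a < b) :
    0 < sInf (g '' Ioo a b) ∧ ∀ t ∈ Icc a b, sInf (g '' Ioo a b) ≤ g t := by
  have hbdd := Real.bddBelow_range_of_iInf_pos h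
  refine ⟨h.trans_le (ciInf_le_csInf_image hbdd (nonempty_Ioo.2 hab)), fun t ht => ?_⟩
  exact csInf_image_le_of_mem_closure hg (hbdd.mono (image_subset_range _ _))
    (by rwa [closure_Ioo hab.ne])

theorem integral_mul_deriv_mul_exp_eq {u u' g g' : ℝ → ℝ} {a b : ℝ}
    (hu : ∀ t ∈ uIcc a b, HasDerivAt u (u' t) t) (hg : ∀ t ∈ uIcc a b, HasDerivAt g (g' t) t)
    (hu' : IntervalIntegrable u' volume a b) (hg' : IntervalIntegrable g' volume a b)
    (hbd : (u b : ℂ) * Complex.exp (I * g b) = u a * Complex.exp (I * g a)) :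
    ∫ t in a..b, (u t * g' t : ℂ) * Complex.exp (I * g t) =
      I * ∫ t in a..b, (u' t : ℂ) * Complex.exp (I * g t) := by
  have hexp : ∀ t ∈ uIcc a b, HasDerivAt (fun s => Complex.exp (I * g s))
      (Complex.exp (I * g t) * (I * g' t)) t := fun t ht =>
    (((hg t ht).ofReal_comp).const_mul I).cexp
  have hexp_cont : ContinuousOn (fun t => Complex.exp (I * g t)) (uIcc a b) := fun t ht =>
    (hexp t ht).continuousAt.continuousWithinAt
  have hparts := intervalIntegral.integral_mul_deriv_eq_deriv_mul
    (fun t ht => (hu t ht).ofReal_comp) hexp ⟨hu'.1.ofReal, hu'.2.ofReal⟩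
    ((IntervalIntegrable.const_mul ⟨hg'.1.ofReal, hg'.2.ofReal⟩ I).continuousOn_mul hexp_cont)
  rw [hbd, sub_self, zero_sub] at hparts
  calc ∫ t in a..b, (u t * g' t : ℂ) * Complex.exp (I * g t)
      = -I * ∫ t in a..b, (u t : ℂ) * (Complex.exp (I * g t) * (I * g' t)) := by
        rw [← intervalIntegral.integral_const_mul]
        congr 1 with t
        linear_combination (u t * g' t * Complex.exp (I * g t) : ℂ) * Complex.I_sq
    _ = I * ∫ t in a..b, (u' t : ℂ) * Complex.exp (I * g t) := by rw [hparts]; ring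

theorem abs_div_sq_deriv_le {x x' y y' M M' ε : ℝ} (hy : 0 < y) (hx : |x| ≤ M)
    (hx' : |x'| ≤ M') (hy' : |y'| ≤ ε * y) :
    |(x' * y - x * y') / y ^ 2| ≤ (M' + ε * M) / y := by
  rw [abs_div, abs_of_pos (pow_pos hy 2), div_le_div_iff₀ (pow_pos hy 2) hy]
  calc |x' * y - x * y'| * y ≤ (|x'| * y + |x| * |y'|) * y := by
        gcongr
        simpa [abs_mul, abs_of_pos hy] using abs_sub (x' * y) (x * y')
    _ ≤ (M' * y + M * (ε * y)) * y := by gcongr; exact (abs_nonneg _).trans hx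
    _ = (M' + ε * M) * y ^ 2 := by ring

theorem norm_integral_ofReal_mul_exp_le {A A' g g' g'' : ℝ → ℝ} {a b ε M M' δ : ℝ}
    (hab : a ≤ b) (hA : ∀ t ∈ Icc a b, HasDerivAt A (A' t) t)
    (hg : ∀ t ∈ Icc a b, HasDerivAt g (g' t) t) (hg' : ∀ t ∈ Icc a b, HasDerivAt g' (g'' t) t)
    (hA'c : ContinuousOn A' (Icc a b)) (hg''c : ContinuousOn g'' (Icc a b))
    (hM : ∀ t ∈ Icc a b, |A t| ≤ M) (hM' : ∀ t ∈ Icc a b, |A' t| ≤ M')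
    (hg'' : ∀ t ∈ Icc a b, |g'' t| ≤ ε * g' t) (hδ : 0 < δ) (hδg' : ∀ t ∈ Icc a b, δ ≤ g' t)
    (hbd : ((A b / g' b : ℝ) : ℂ) * Complex.exp (I * g b) =
      (A a / g' a : ℝ) * Complex.exp (I * g a)) :
    ‖∫ t in a..b, (A t : ℂ) * Complex.exp (I * g t)‖ ≤ (M' + ε * M) / δ * (b - a) := by
  have hab' : uIcc a b = Icc a b := uIcc_of_le hab
  have hg'pos : ∀ t ∈ Icc a b, 0 < g' t := fun t ht => hδ.trans_le (hδg' t ht)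
  have ha : a ∈ Icc a b := left_mem_Icc.2 hab
  have hε : 0 ≤ ε :=
    (mul_nonneg_iff_of_pos_right (hg'pos a ha)).1 ((abs_nonneg _).trans (hg'' a ha))
  have hg'c : ContinuousOn g' (Icc a b) := fun t ht => (hg' t ht).continuousAt.continuousWithinAt
  have hu : ∀ t ∈ uIcc a b, HasDerivAt (fun s => A s / g' s)
      ((A' t * g' t - A t * g'' t) / g' t ^ 2) t := fun t ht =>
    (hA t (hab' ▸ ht)).div (hg' t (hab' ▸ ht)) (hg'pos t (hab' ▸ ht)).ne'
  have hu'c : ContinuousOn (fun t => (A' t * g' t - A t * g'' t) / g' t ^ 2) (uIcc a b) := by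
    rw [hab']
    refine ((hA'c.mul hg'c).sub (ContinuousOn.mul (fun t ht => ?_) hg''c)).div (hg'c.pow 2)
      fun t ht => (pow_pos (hg'pos t ht) 2).ne'
    exact (hA t ht).continuousAt.continuousWithinAt
  have hsplit : ∫ t in a..b, (A t : ℂ) * Complex.exp (I * g t) =
      ∫ t in a..b, ((A t / g' t : ℝ) * g' t : ℂ) * Complex.exp (I * g t) :=
    intervalIntegral.integral_congr fun t ht => by
      rw [← Complex.ofReal_mul, div_mul_cancel₀ _ (hg'pos t (hab' ▸ ht)).ne']
  rw [hsplit, integral_mul_deriv_mul_exp_eq hu (fun t ht => hg t (hab' ▸ ht))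
    (hu'c.intervalIntegrable) ((hab' ▸ hg'c).intervalIntegrable) hbd, norm_mul, Complex.norm_I,
    one_mul, ← abs_of_nonneg (sub_nonneg.2 hab)]
  refine intervalIntegral.norm_integral_le_of_norm_le_const fun t ht => ?_
  have ht' : t ∈ Icc a b := Ioc_subset_Icc_self (by rwa [uIoc_of_le hab] at ht)
  rw [norm_mul, Complex.norm_exp_I_mul_ofReal, mul_one, Complex.norm_real, Real.norm_eq_abs]
  calc _ ≤ (M' + ε * M) / g' t :=
        abs_div_sq_deriv_le (hg'pos t ht') (hM t ht') (hM' t ht') (hg'' t ht')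
    _ ≤ (M' + ε * M) / δ := by
        have hK : 0 ≤ M' + ε * M := add_nonneg ((abs_nonneg _).trans (hM' a ha))
          (mul_nonneg hε ((abs_nonneg _).trans (hM a ha)))
        gcongr
        exact hδg' t ht'

theorem tsum_sq_le_of_le_div_add {x : ℕ → ℝ} {K δ : ℝ} (hδ : 0 < δ) (hx0 : ∀ k, 0 ≤ x k)
    (hx : ∀ k, x k ≤ K / (δ + (k + 1))) : ∑' k, x k ^ 2 ≤ K ^ 2 / δ := by
  have hterm : ∀ k : ℕ, x k ^ 2 ≤ K ^ 2 / (δ + k) - K ^ 2 / (δ + (k + 1)) := fun k => by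
    have hk : 0 < δ + k := by positivity
    calc x k ^ 2 ≤ (K / (δ + (k + 1))) ^ 2 := pow_le_pow_left₀ (hx0 k) (hx k) 2
      _ = K ^ 2 / ((δ + (k + 1)) * (δ + (k + 1))) := by rw [div_pow, sq (δ + _)]
      _ ≤ K ^ 2 / ((δ + k) * (δ + (k + 1))) := by gcongr; linarith
      _ = K ^ 2 / (δ + k) - K ^ 2 / (δ + (k + 1)) := by field_simp; ring
  refine Real.tsum_le_of_sum_range_le (fun k => sq_nonneg _) fun n => ?_
  calc ∑ k ∈ Finset.range n, x k ^ 2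
      ≤ ∑ k ∈ Finset.range n, (K ^ 2 / (δ + k) - K ^ 2 / (δ + (k + 1 : ℕ))) := by
        push_cast
        exact Finset.sum_le_sum fun k _ => hterm k
    _ = K ^ 2 / δ - K ^ 2 / (δ + n) := by
        rw [Finset.sum_range_sub' (fun k : ℕ => K ^ 2 / (δ + k)), Nat.cast_zero, add_zero]
    _ ≤ K ^ 2 / δ := sub_le_self _ (by positivity)

theorem fourierCoef_neg_natCast_eq (A φ : ℝ → ℝ) (n : ℕ) :
    fourierCoef (fun t => (A t : ℂ) * Complex.exp (I * φ t)) (-n) =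
      1 / (2 * π) * ∫ t in (0 : ℝ)..2 * π, (A t : ℂ) * Complex.exp (I * (φ t + n * t : ℝ)) := by
  unfold fourierCoef
  congr 1
  refine intervalIntegral.integral_congr fun t _ => ?_
  rw [mul_assoc, ← Complex.exp_add]
  push_cast
  ring_nf

theorem norm_fourierCoef_neg_le {A φ : ℝ → ℝ} {m : ℤ} {ε M M' δ : ℝ}
    (hA : ContDiff ℝ 1 A) (hAper : Function.Periodic A (2 * π))
    (hφ : ContDiff ℝ 2 φ) (hφper : ∀ t, φ (t + 2 * π) = φ t + 2 * π * m)
    (hφ'' : ∀ t, |deriv (deriv φ) t| ≤ ε * deriv φ t)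
    (hM : ∀ t, |A t| ≤ M) (hM' : ∀ t, |deriv A t| ≤ M')
    (hδ : 0 < δ) (hδφ' : ∀ t ∈ Icc 0 (2 * π), δ ≤ deriv φ t) (n : ℕ) :
    ‖fourierCoef (fun t => (A t : ℂ) * Complex.exp (I * φ t)) (-n)‖ ≤
      (M' + ε * M) / (δ + n) := by
  have hφ' : ContDiff ℝ 1 (deriv φ) := hφ.deriv'
  have h0 : (0 : ℝ) ∈ Icc 0 (2 * π) := left_mem_Icc.2 two_pi_pos.le
  have hε : 0 ≤ ε := (mul_nonneg_iff_of_pos_right (hδ.trans_le (hδφ' 0 h0))).1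
    ((abs_nonneg _).trans (hφ'' 0))
  have hφ''le : ∀ t, |deriv (deriv φ) t| ≤ ε * (deriv φ t + n) := fun t =>
    (hφ'' t).trans (mul_le_mul_of_nonneg_left (le_add_of_nonneg_right n.cast_nonneg) hε)
  have hbd : ((A (2 * π) / (deriv φ (2 * π) + n) : ℝ) : ℂ) *
        Complex.exp (I * (φ (2 * π) + n * (2 * π) : ℝ)) =
      (A 0 / (deriv φ 0 + n) : ℝ) * Complex.exp (I * (φ 0 + n * 0 : ℝ)) := by
    have hA2 : A (2 * π) = A 0 := by simpa using hAper 0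
    have hφ2 : φ (2 * π) = φ 0 + 2 * π * m := by simpa using hφper 0
    have hφ'2 : deriv φ (2 * π) = deriv φ 0 := by
      simpa using periodic_deriv_of_add_period_eq hφper 0
    have hexp : Complex.exp (I * (φ (2 * π) + n * (2 * π) : ℝ)) =
        Complex.exp (I * (φ 0 + n * 0 : ℝ)) :=
      Complex.exp_eq_exp_iff_exists_int.2 ⟨m + n, by rw [hφ2]; push_cast; ring⟩
    rw [hA2, hφ'2, hexp]
  have hint := norm_integral_ofReal_mul_exp_le (g := fun t => φ t + n * t)
    (g' := fun t => deriv φ t + n) (δ := δ + n) two_pi_pos.le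
    (fun t _ => (hA.differentiable one_ne_zero t).hasDerivAt)
    (fun t _ => by
      simpa using (hφ.differentiable (by norm_num) t).hasDerivAt.fun_add
        ((hasDerivAt_id' t).const_mul (n : ℝ)))
    (fun t _ => (hφ'.differentiable one_ne_zero t).hasDerivAt.add_const (n : ℝ))
    (hA.continuous_deriv le_rfl).continuousOn (hφ'.continuous_deriv le_rfl).continuousOn
    (fun t _ => hM t) (fun t _ => hM' t) (fun t _ => hφ''le t) (by positivity)
    (fun t ht => by linarith [hδφ' t ht]) hbd
  rw [fourierCoef_neg_natCast_eq, norm_mul,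
    show ‖(1 / (2 * π) : ℂ)‖ = 1 / (2 * π) by simp [pi_pos.le]]
  calc 1 / (2 * π) * _ ≤ 1 / (2 * π) * ((M' + ε * M) / (δ + n) * (2 * π - 0)) := by gcongr
    _ = (M' + ε * M) / (δ + n) := by field_simp; ring

theorem two_pi_mul_add_sq_le (a b : ℝ) : 2 * π * (a + b) ^ 2 ≤ 8 * π ^ 2 * (a ^ 2 + b ^ 2) :=
  calc 2 * π * (a + b) ^ 2 ≤ 2 * π * (2 * (a ^ 2 + b ^ 2)) := by gcongr; exact add_sq_le
    _ ≤ 8 * π ^ 2 * (a ^ 2 + b ^ 2) := by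
        have : 0 ≤ π * (a ^ 2 + b ^ 2) * (2 * π - 1) :=
          mul_nonneg (by positivity) (by linarith [pi_gt_three])
        nlinarith

/-- By Plancherel, `‖P₋ f‖²_{L²(0,2π)} = 2π · Σ_{n<0} |f̂(n)|²` is the left-hand side. -/
theorem imt_almost_holomorphic_general (ε : ℝ) (A φ : ℝ → ℝ) (f : ℝ → ℂ)
    (hA : ContDiff ℝ 1 A) (hAper : Function.Periodic A (2 * π)) (hApos : ∀ t, 0 < A t)
    (hφ : ContDiff ℝ 2 φ) (m : ℤ) (hφper : ∀ t, φ (t + 2 * π) = φ t + 2 * π * m)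
    (hinf : 0 < ⨅ t : ℝ, deriv φ t)
    (hφ'' : ∀ t, |deriv (deriv φ) t| ≤ ε * deriv φ t)
    (hf : ∀ t, f t = (A t : ℂ) * Complex.exp (Complex.I * φ t)) :
    2 * π * ∑' k : ℕ, ‖fourierCoef f (-((k : ℤ) + 1))‖ ^ 2 ≤
      8 * π ^ 2 / (∫ t in (0:ℝ)..(2 * π), A t ^ 2) *
        ((⨆ t : ℝ, |deriv A t|) ^ 2 + ε ^ 2 * (⨆ t : ℝ, |A t|) ^ 2) /
          sInf (deriv φ '' Set.Ioo 0 (2 * π)) *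
        ∫ t in (0:ℝ)..(2 * π), ‖f t‖ ^ 2 := by
  set M := ⨆ t : ℝ, |A t|
  set M' := ⨆ t : ℝ, |deriv A t|
  set δ := sInf (deriv φ '' Ioo 0 (2 * π))
  set J := ∫ t in (0:ℝ)..(2 * π), A t ^ 2
  obtain ⟨hδ, hδφ'⟩ :=
    (hφ.continuous_deriv (by norm_num)).sInf_image_Ioo_pos_and_le hinf two_pi_pos
  have hcoef : ∀ k : ℕ, ‖fourierCoef f (-((k : ℤ) + 1))‖ ≤ (M' + ε * M) / (δ + (k + 1)) :=
    fun k => by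
      simpa [funext hf] using norm_fourierCoef_neg_le hA hAper hφ hφper hφ''
        (hAper.abs_le_ciSup_abs two_pi_pos.ne' hA.continuous)
        (hAper.deriv.abs_le_ciSup_abs two_pi_pos.ne' (hA.continuous_deriv le_rfl)) hδ hδφ' (k + 1)
  have hnorm_f : ∫ t in (0:ℝ)..(2 * π), ‖f t‖ ^ 2 = J :=
    intervalIntegral.integral_congr fun t _ => by
      simp only [hf, norm_mul, Complex.norm_exp_I_mul_ofReal, mul_one, Complex.norm_real,
        norm_eq_abs, sq_abs]
  have hJ : 0 < J :=
    intervalIntegral.intervalIntegral_pos_of_pos_on ((hA.continuous.pow 2).intervalIntegrable _ _)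
      (fun t _ => pow_pos (hApos t) 2) two_pi_pos
  rw [hnorm_f]
  calc 2 * π * ∑' k : ℕ, ‖fourierCoef f (-((k : ℤ) + 1))‖ ^ 2
      ≤ 2 * π * ((M' + ε * M) ^ 2 / δ) := by
        gcongr
        exact tsum_sq_le_of_le_div_add hδ (fun k => norm_nonneg _) hcoef
    _ ≤ 8 * π ^ 2 * (M' ^ 2 + ε ^ 2 * M ^ 2) / δ := by
        rw [mul_div_assoc', div_le_div_iff_of_pos_right hδ, ← mul_pow]
        exact two_pi_mul_add_sq_le M' (ε * M)
    _ = _ := by field_simp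

/-- Intrinsic-mode type functions are almost holomorphic: by Plancherel,
`‖P₋ f‖²_{L²(0,2π)} = 2π · Σ_{n<0} |f̂(n)|²` is bounded by the stated multiple
of `‖f‖²_{L²(0,2π)}`. -/
theorem imt_almost_holomorphic (ε : ℝ) (hε : 0 < ε) (A φ : ℝ → ℝ) (f : ℝ → ℂ)
    (hA : ContDiff ℝ 1 A) (hAper : Function.Periodic A (2 * π)) (hApos : ∀ t, 0 < A t)
    (hφ : ContDiff ℝ 2 φ) (m : ℤ) (hφper : ∀ t, φ (t + 2 * π) = φ t + 2 * π * m)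
    (hinf : 0 < ⨅ t : ℝ, deriv φ t) (hsup : BddAbove (Set.range (deriv φ)))
    (hA' : ∀ t, |deriv A t| ≤ ε * deriv φ t)
    (hφ'' : ∀ t, |deriv (deriv φ) t| ≤ ε * deriv φ t)
    (hf : ∀ t, f t = (A t : ℂ) * Complex.exp (Complex.I * φ t)) :
    2 * π * ∑' k : ℕ, ‖fourierCoef f (-((k : ℤ) + 1))‖ ^ 2 ≤
      8 * π ^ 2 / (∫ t in (0:ℝ)..(2 * π), A t ^ 2) *
        ((⨆ t : ℝ, |deriv A t|) ^ 2 + ε ^ 2 * (⨆ t : ℝ, |A t|) ^ 2) /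
          sInf (deriv φ '' Set.Ioo 0 (2 * π)) *
        ∫ t in (0:ℝ)..(2 * π), ‖f t‖ ^ 2 :=
  imt_almost_holomorphic_general ε A φ f hA hAper hApos hφ m hφper hinf hφ'' hf
end

section
/- Let A : ℝ → ℝ be continuously differentiable, nonnegative and 2π-periodic, and let φ : ℝ → ℝ be twice continuously differentiable with φ′ 2π-periodic, φ′(t) > 0 for all t, and φ(t + 2π) = φ(t) + 2πm for some fixed integer m. Then for every positive integer n, |∫₀^{2π} A(t) e^{i(φ(t) + nt)} dt| ≤ ∫₀^{2π} ( |A′(t)|/(φ′(t) + n) + 2A(t)|φ″(t)|/(φ′(t) + n)² ) dt. -/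
open Real MeasureTheory

/-! Write `ψ t = φ t + n t`, so that `ψ' = φ' + n > 0`, and `A = w ψ'` with `w = A / ψ'`. Then
`A e^{iψ} = -i w (e^{iψ})'`, and integrating by parts over a period moves the derivative onto `w`:
the boundary term vanishes because `w` is `2π`-periodic and `ψ(2π) - ψ(0) = 2π(m + n)`. What is
left is bounded by `∫ |w'|`, and `w' = A'/ψ' - A ψ''/ψ'^2`. -/

theorem norm_integral_mul_deriv_mul_cexp_le {a b : ℝ} (hab : a ≤ b) {w w' ψ ψ' : ℝ → ℝ}
    (hw : ∀ t ∈ Set.uIcc a b, HasDerivAt w (w' t) t)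
    (hψ : ∀ t ∈ Set.uIcc a b, HasDerivAt ψ (ψ' t) t)
    (hw' : ContinuousOn w' (Set.uIcc a b)) (hψ' : ContinuousOn ψ' (Set.uIcc a b))
    (hbdry : (w b : ℂ) * Complex.exp (Complex.I * ψ b) = w a * Complex.exp (Complex.I * ψ a)) :
    ‖∫ t in a..b, ((w t * ψ' t : ℝ) : ℂ) * Complex.exp (Complex.I * ψ t)‖ ≤
      ∫ t in a..b, |w' t| := by
  have hexp : ∀ t ∈ Set.uIcc a b, HasDerivAt (fun t ↦ Complex.exp (Complex.I * ψ t))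
      (Complex.I * ψ' t * Complex.exp (Complex.I * ψ t)) t := fun t ht ↦ by
    simpa [mul_comm] using (((hψ t ht).ofReal_comp).const_mul Complex.I).cexp
  have hparts := intervalIntegral.integral_mul_deriv_eq_deriv_mul
    (fun t ht ↦ (hw t ht).ofReal_comp) hexp
    (Complex.continuous_ofReal.comp_continuousOn hw').intervalIntegrable
    (((continuous_const.continuousOn.mul (Complex.continuous_ofReal.comp_continuousOn hψ')).mul
      (HasDerivAt.continuousOn hexp)).intervalIntegrable)
  rw [hbdry, sub_self, zero_sub] at hparts
  calc ‖∫ t in a..b, ((w t * ψ' t : ℝ) : ℂ) * Complex.exp (Complex.I * ψ t)‖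
      = ‖Complex.I * ∫ t in a..b, ((w t * ψ' t : ℝ) : ℂ) * Complex.exp (Complex.I * ψ t)‖ := by
        rw [norm_mul, Complex.norm_I, one_mul]
    _ = ‖∫ t in a..b, (w t : ℂ) * (Complex.I * ψ' t * Complex.exp (Complex.I * ψ t))‖ := by
        rw [← intervalIntegral.integral_const_mul]
        push_cast
        ring_nf
    _ = ‖∫ t in a..b, (w' t : ℂ) * Complex.exp (Complex.I * ψ t)‖ := by
        rw [hparts, norm_neg]
    _ ≤ ∫ t in a..b, ‖(w' t : ℂ) * Complex.exp (Complex.I * ψ t)‖ :=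
        intervalIntegral.norm_integral_le_integral_norm hab
    _ = ∫ t in a..b, |w' t| := by
        simp [Complex.norm_exp]

theorem Complex.exp_I_mul_ofReal_add_two_pi_mul_int (x : ℝ) (k : ℤ) :
    exp (I * ↑(x + 2 * π * k)) = exp (I * x) := by
  have hk : exp (I * ↑(2 * π * k)) = 1 := by
    rw [← exp_int_mul_two_pi_mul_I k]
    push_cast
    ring_nf
  rw [ofReal_add, mul_add, exp_add, hk, mul_one]

theorem norm_integral_mul_deriv_mul_cexp_le_of_periodic {T : ℝ} (hT : 0 ≤ T) (k : ℤ)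
    {w w' ψ ψ' : ℝ → ℝ} (hw : ∀ t, HasDerivAt w (w' t) t) (hψ : ∀ t, HasDerivAt ψ (ψ' t) t)
    (hw' : Continuous w') (hψ' : Continuous ψ') (hwper : Function.Periodic w T)
    (hψper : ∀ t, ψ (t + T) = ψ t + 2 * π * k) :
    ‖∫ t in (0:ℝ)..T, ((w t * ψ' t : ℝ) : ℂ) * Complex.exp (Complex.I * ψ t)‖ ≤
      ∫ t in (0:ℝ)..T, |w' t| := by
  refine norm_integral_mul_deriv_mul_cexp_le hT (fun t _ ↦ hw t) (fun t _ ↦ hψ t)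
    hw'.continuousOn hψ'.continuousOn ?_
  have hψT : ψ T = ψ 0 + 2 * π * k := by simpa using hψper 0
  rw [hwper.eq, hψT, Complex.exp_I_mul_ofReal_add_two_pi_mul_int]

theorem abs_mul_sub_mul_div_sq_le {a a' p q : ℝ} (hp : 0 < p) :
    |(a' * p - a * q) / p ^ 2| ≤ |a'| / p + |a| * |q| / p ^ 2 := by
  calc |(a' * p - a * q) / p ^ 2| ≤ (|a'| * p + |a| * |q|) / p ^ 2 := by
        rw [abs_div, abs_of_pos (by positivity : 0 < p ^ 2)]
        gcongr
        refine (abs_sub _ _).trans_eq ?_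
        rw [abs_mul, abs_mul, abs_of_pos hp]
    _ = |a'| / p + |a| * |q| / p ^ 2 := by field_simp

theorem oscillatory_integral_bound_general (A φ : ℝ → ℝ)
    (hA : ContDiff ℝ 1 A) (hAnonneg : ∀ t, 0 ≤ A t) (hAper : Function.Periodic A (2 * π))
    (hφ : ContDiff ℝ 2 φ) (hφ'per : Function.Periodic (deriv φ) (2 * π))
    (hφ'pos : ∀ t, 0 < deriv φ t)
    (m : ℤ) (hφper : ∀ t, φ (t + 2 * π) = φ t + 2 * π * m)
    (n : ℕ) :
    ‖∫ t in (0:ℝ)..(2 * π), (A t : ℂ) * Complex.exp (Complex.I * (φ t + n * t))‖ ≤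
      ∫ t in (0:ℝ)..(2 * π),
        (|deriv A t| / (deriv φ t + n) +
          2 * A t * |deriv (deriv φ) t| / (deriv φ t + n) ^ 2) := by
  have hφ' : ContDiff ℝ 1 (deriv φ) := hφ.deriv'
  have hA' := hA.continuous_deriv le_rfl
  have hφ'' := hφ'.continuous_deriv le_rfl
  set ψ : ℝ → ℝ := fun t ↦ φ t + n * t
  set ψ' : ℝ → ℝ := fun t ↦ deriv φ t + n
  have hψ'pos (t : ℝ) : 0 < ψ' t := by positivity [hφ'pos t]
  have hψ'ne (t : ℝ) : ψ' t ≠ 0 := (hψ'pos t).ne'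
  have hψ (t : ℝ) : HasDerivAt ψ (ψ' t) t := by
    have := (hφ.differentiable two_ne_zero t).hasDerivAt.add ((hasDerivAt_id t).const_mul (n : ℝ))
    rwa [mul_one] at this
  have hw (t : ℝ) : HasDerivAt (fun t ↦ A t / ψ' t)
      ((deriv A t * ψ' t - A t * deriv (deriv φ) t) / ψ' t ^ 2) t :=
    (hA.differentiable one_ne_zero t).hasDerivAt.div
      ((hφ'.differentiable one_ne_zero t).hasDerivAt.add_const _) (hψ'ne t)
  have hw'cont : Continuous fun t ↦ (deriv A t * ψ' t - A t * deriv (deriv φ) t) / ψ' t ^ 2 := by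
    fun_prop (disch := exact fun t ↦ pow_ne_zero 2 (hψ'ne t))
  have hψper (t : ℝ) : ψ (t + 2 * π) = ψ t + 2 * π * (m + n : ℤ) := by
    simp only [ψ, hφper]
    push_cast
    ring
  calc ‖∫ t in (0:ℝ)..(2 * π), (A t : ℂ) * Complex.exp (Complex.I * (φ t + n * t))‖
      = ‖∫ t in (0:ℝ)..(2 * π),
          ((A t / ψ' t * ψ' t : ℝ) : ℂ) * Complex.exp (Complex.I * ψ t)‖ := by
        simp only [div_mul_cancel₀ _ (hψ'ne _), ψ]
        push_cast
        rfl
    _ ≤ ∫ t in (0:ℝ)..(2 * π), |(deriv A t * ψ' t - A t * deriv (deriv φ) t) / ψ' t ^ 2| :=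
        norm_integral_mul_deriv_mul_cexp_le_of_periodic (by positivity) (m + n) hw hψ hw'cont
          (hφ'.continuous.add continuous_const)
          (hAper.div fun t ↦ by simp only [ψ', hφ'per t]) hψper
    _ ≤ _ := by
        refine intervalIntegral.integral_mono_on (by positivity)
          (hw'cont.abs.intervalIntegrable _ _)
          (Continuous.intervalIntegrable (by
            fun_prop (disch := first | exact hψ'ne | exact fun t ↦ pow_ne_zero 2 (hψ'ne t))) _ _)
          fun t _ ↦ (abs_mul_sub_mul_div_sq_le (hψ'pos t)).trans ?_
        rw [abs_of_nonneg (hAnonneg t)]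
        gcongr
        linarith [hAnonneg t]

/-- The key oscillatory-integral (van der Corput type) estimate: one integration by parts
bounds the negative Fourier coefficients of `A(t) e^{iφ(t)}`. -/
theorem oscillatory_integral_bound (A φ : ℝ → ℝ)
    (hA : ContDiff ℝ 1 A) (hAnonneg : ∀ t, 0 ≤ A t) (hAper : Function.Periodic A (2 * π))
    (hφ : ContDiff ℝ 2 φ) (hφ'per : Function.Periodic (deriv φ) (2 * π))
    (hφ'pos : ∀ t, 0 < deriv φ t)
    (m : ℤ) (hφper : ∀ t, φ (t + 2 * π) = φ t + 2 * π * m)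
    (n : ℕ) (hn : 0 < n) :
    ‖∫ t in (0:ℝ)..(2 * π), (A t : ℂ) * Complex.exp (Complex.I * (φ t + n * t))‖ ≤
      ∫ t in (0:ℝ)..(2 * π),
        (|deriv A t| / (deriv φ t + n) +
          2 * A t * |deriv (deriv φ) t| / (deriv φ t + n) ^ 2) :=
  oscillatory_integral_bound_general A φ hA hAnonneg hAper hφ hφ'per hφ'pos m hφper n
end

section
/- Let J ≥ 1, let α₁, …, α_J be complex numbers in the open unit disk 𝔻, let G be holomorphic on an open neighborhood of the closed unit disk with G(z) ≠ 0 for all |z| ≤ 1, let B(z) = ∏_{j=1}^{J} (z − α_j)/(1 − \overline{α_j} z), and set F = B · G. Then ∫_𝔻 |F′(z)|² dA(z) = ∫_𝔻 |G′(z)|² dA(z) + (1/2) ∫₀^{2π} |G(e^{it})|² Σ_{j=1}^{J} (1 − |α_j|²)/|e^{it} − α_j|² dt, where dA denotes two-dimensional Lebesgue measure on the open unit disk 𝔻 ⊂ ℂ. -/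
/-!
Write `g = conj f · f'` and use polar coordinates `z = x e^{it}`. The plane field
`(P, Q) = (z g(z), i e^{it} g(z))` has divergence `2x |f'(z)|²`, the Dirichlet density times the
Jacobian `x`. On `[0, 1] × [0, 2π]` the flux through `t = 0` and `t = 2π` cancels by periodicity
and `P` vanishes at `x = 0`, so the divergence theorem gives
`2 ∫_𝔻 |f'|² = ∫₀^{2π} z conj(f(z)) f'(z) dt` with `z = e^{it}`.

On the circle `|B| = 1`, so `conj B · B' = B'/B` and
`z conj(F) F' = z conj(G) G' + |G|² z B'/B`. The logarithmic derivative of `B` is the sum of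
those of its factors, and `z B_α'/B_α = (1 - |α|²)/|z - α|²` when `|z| = 1`.
-/

open Real MeasureTheory

open Set Metric ComplexConjugate
open scoped Interval

lemma Complex.polarCoord_symm_eq_circleMap (p : ℝ × ℝ) :
    Complex.polarCoord.symm p = circleMap 0 p.1 p.2 := by
  rw [Complex.polarCoord_symm_apply, circleMap_zero, Complex.exp_mul_I, ← Complex.ofReal_cos,
    ← Complex.ofReal_sin]

lemma hasDerivAt_circleMap_radius (c : ℂ) (x θ : ℝ) :
    HasDerivAt (fun s : ℝ => circleMap c s θ) (circleMap 0 1 θ) x := by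
  simpa [circleMap] using ((hasDerivAt_id x).ofReal_comp.mul_const _).const_add c

lemma differentiable_circleMap_uncurry (c : ℂ) :
    Differentiable ℝ (fun p : ℝ × ℝ => circleMap c p.1 p.2) := by
  unfold circleMap
  fun_prop

lemma circleMap_mem_closedBall_of_mem_uIcc {r x : ℝ} (hr : 0 ≤ r) (hx : x ∈ [[0, r]]) (t : ℝ) :
    circleMap 0 x t ∈ closedBall 0 r := by
  rw [uIcc_of_le hr] at hx
  simpa [abs_of_nonneg hx.1] using hx.2

section PolarCoordinates

variable {E : Type*} [NormedAddCommGroup E] [NormedSpace ℝ E] {h : ℂ → E} {r : ℝ}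

theorem integral_ball_eq_setIntegral_polar :
    ∫ z in ball (0 : ℂ) r, h z =
      ∫ p in Ioo 0 r ×ˢ Ioo (-π) π, p.1 • h (circleMap 0 p.1 p.2) := by
  have hind : ∀ p ∈ polarCoord.target,
      p.1 • (ball 0 r).indicator h (Complex.polarCoord.symm p) =
        (Iio r ×ˢ univ).indicator (fun p : ℝ × ℝ => p.1 • h (circleMap 0 p.1 p.2)) p := by
    rintro ⟨x, t⟩ ⟨hx, -⟩
    have hx : 0 < x := hx
    rw [Complex.polarCoord_symm_eq_circleMap]
    by_cases hxr : x < r <;> simp [indicator, hxr, abs_of_pos hx]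
  rw [← integral_indicator measurableSet_ball, ← Complex.integral_comp_polarCoord_symm,
    setIntegral_congr_fun polarCoord.open_target.measurableSet hind,
    setIntegral_indicator (measurableSet_Iio.prod .univ), polarCoord_target, prod_inter_prod,
    Ioi_inter_Iio, inter_univ]

theorem integral_ball_eq_intervalIntegral_circleMap (hr : 0 ≤ r)
    (hh : ContinuousOn h (closedBall 0 r)) :
    ∫ z in ball (0 : ℂ) r, h z =
      ∫ x in 0..r, ∫ t in 0..2 * π, x • h (circleMap 0 x t) := by
  set φ : ℝ × ℝ → E := fun p => p.1 • h (circleMap 0 p.1 p.2)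
  have hφ : IntegrableOn φ (Ioo 0 r ×ˢ Ioo (-π) π) := by
    refine (ContinuousOn.integrableOn_compact (isCompact_Icc.prod isCompact_Icc) ?_).mono_set
      (prod_mono Ioo_subset_Icc_self Ioo_subset_Icc_self)
    refine continuous_fst.continuousOn.smul (hh.comp (by fun_prop) ?_)
    exact fun p hp => circleMap_mem_closedBall_of_mem_uIcc hr (Icc_subset_uIcc hp.1) p.2
  have hangle (x : ℝ) : ∫ t in Ioo (-π) π, φ (x, t) = ∫ t in 0..2 * π, φ (x, t) := by
    have hper : Function.Periodic (fun t => φ (x, t)) (2 * π) := fun t => by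
      simp only [φ, periodic_circleMap 0 x t]
    rw [← integral_Ioc_eq_integral_Ioo,
      ← intervalIntegral.integral_of_le (by linarith [pi_pos])]
    simpa [show -π + 2 * π = π by ring] using hper.intervalIntegral_add_eq (-π) 0
  rw [integral_ball_eq_setIntegral_polar, Measure.volume_eq_prod, setIntegral_prod φ hφ,
    intervalIntegral.integral_of_le hr, integral_Ioc_eq_integral_Ioo]
  simp_rw [hangle]
  rfl

end PolarCoordinates

section PartialDerivatives

variable {E : Type*} [NormedAddCommGroup E] [NormedSpace ℝ E] {P : ℝ × ℝ → E} {p : ℝ × ℝ}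
  {a : E}

lemma fderiv_apply_one_zero_eq (hP : DifferentiableAt ℝ P p)
    (h : HasDerivAt (fun x => P (x, p.2)) a p.1) : fderiv ℝ P p (1, 0) = a :=
  (hP.hasFDerivAt.comp_hasDerivAt p.1 ((hasDerivAt_id _).prodMk (hasDerivAt_const _ _))).unique h

lemma fderiv_apply_zero_one_eq (hP : DifferentiableAt ℝ P p)
    (h : HasDerivAt (fun y => P (p.1, y)) a p.2) : fderiv ℝ P p (0, 1) = a :=
  (hP.hasFDerivAt.comp_hasDerivAt p.2 ((hasDerivAt_const _ _).prodMk (hasDerivAt_id _))).unique h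

end PartialDerivatives

noncomputable def conjMulDeriv (f : ℂ → ℂ) (z : ℂ) : ℂ := conj (f z) * deriv f z

noncomputable def dirichletFieldRadial (f : ℂ → ℂ) (p : ℝ × ℝ) : ℂ :=
  circleMap 0 p.1 p.2 * conjMulDeriv f (circleMap 0 p.1 p.2)

noncomputable def dirichletFieldAngular (f : ℂ → ℂ) (p : ℝ × ℝ) : ℂ :=
  circleMap 0 1 p.2 * Complex.I * conjMulDeriv f (circleMap 0 p.1 p.2)

section DirichletIntegral

variable {f : ℂ → ℂ} {U : Set ℂ} {z : ℂ} {p : ℝ × ℝ} {r : ℝ}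

lemma continuousOn_conjMulDeriv (hU : IsOpen U) (hf : DifferentiableOn ℂ f U) :
    ContinuousOn (conjMulDeriv f) U :=
  (Complex.continuous_conj.comp_continuousOn hf.continuousOn).mul
    (hf.analyticOnNhd hU).deriv.continuousOn

lemma differentiableAt_conjMulDeriv (hU : IsOpen U) (hf : DifferentiableOn ℂ f U) (hz : z ∈ U) :
    DifferentiableAt ℝ (conjMulDeriv f) z :=
  ((hf.differentiableAt (hU.mem_nhds hz)).restrictScalars ℝ).star.mul
    (((hf.analyticOnNhd hU z hz).deriv.differentiableAt).restrictScalars ℝ)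

lemma hasDerivAt_conjMulDeriv_comp (hU : IsOpen U) (hf : DifferentiableOn ℂ f U)
    {γ : ℝ → ℂ} {v : ℂ} {t : ℝ} (hγ : HasDerivAt γ v t) (ht : γ t ∈ U) :
    HasDerivAt (fun s => conjMulDeriv f (γ s))
      (conj (v * deriv f (γ t)) * deriv f (γ t) +
        conj (f (γ t)) * (v * deriv (deriv f) (γ t))) t := by
  have h := ((hf.differentiableAt (hU.mem_nhds ht)).hasDerivAt.scomp t hγ).star.fun_mul
    ((hf.analyticOnNhd hU _ ht).deriv.differentiableAt.hasDerivAt.scomp t hγ)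
  simp only [Function.comp_apply, smul_eq_mul] at h
  exact h

lemma differentiableAt_conjMulDeriv_circleMap (hU : IsOpen U) (hf : DifferentiableOn ℂ f U)
    (hp : circleMap 0 p.1 p.2 ∈ U) :
    DifferentiableAt ℝ (fun q : ℝ × ℝ => conjMulDeriv f (circleMap 0 q.1 q.2)) p :=
  (differentiableAt_conjMulDeriv hU hf hp).comp (f := fun q : ℝ × ℝ => circleMap 0 q.1 q.2) _
    (differentiable_circleMap_uncurry 0 _)

lemma differentiableAt_dirichletFieldRadial (hU : IsOpen U) (hf : DifferentiableOn ℂ f U)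
    (hp : circleMap 0 p.1 p.2 ∈ U) : DifferentiableAt ℝ (dirichletFieldRadial f) p :=
  (differentiable_circleMap_uncurry 0 _).mul (differentiableAt_conjMulDeriv_circleMap hU hf hp)

lemma differentiableAt_dirichletFieldAngular (hU : IsOpen U) (hf : DifferentiableOn ℂ f U)
    (hp : circleMap 0 p.1 p.2 ∈ U) : DifferentiableAt ℝ (dirichletFieldAngular f) p := by
  have : DifferentiableAt ℝ (fun q : ℝ × ℝ => circleMap 0 1 q.2 * Complex.I) p := by
    unfold circleMap
    fun_prop
  exact this.mul (differentiableAt_conjMulDeriv_circleMap hU hf hp)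

lemma divergence_dirichletField (hU : IsOpen U) (hf : DifferentiableOn ℂ f U)
    (hp : circleMap 0 p.1 p.2 ∈ U) :
    fderiv ℝ (dirichletFieldRadial f) p (1, 0) + fderiv ℝ (dirichletFieldAngular f) p (0, 1) =
      ((2 * p.1 * ‖deriv f (circleMap 0 p.1 p.2)‖ ^ 2 : ℝ) : ℂ) := by
  obtain ⟨x, t⟩ := p
  have hradial := (hasDerivAt_circleMap_radius 0 x t).mul
    (hasDerivAt_conjMulDeriv_comp hU hf (hasDerivAt_circleMap_radius 0 x t) hp)
  have hangular := ((hasDerivAt_circleMap 0 1 t).mul_const Complex.I).mul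
    (hasDerivAt_conjMulDeriv_comp hU hf (hasDerivAt_circleMap 0 x t) hp)
  rw [fderiv_apply_one_zero_eq (differentiableAt_dirichletFieldRadial hU hf hp) hradial,
    fderiv_apply_zero_one_eq (differentiableAt_dirichletFieldAngular hU hf hp) hangular]
  have he : conj (Complex.exp (t * Complex.I)) * Complex.exp (t * Complex.I) = 1 := by
    rw [Complex.conj_mul', Complex.norm_exp_ofReal_mul_I]
    simp
  push_cast
  rw [← Complex.mul_conj']
  simp only [circleMap_zero, conjMulDeriv, map_mul, Complex.conj_ofReal, Complex.conj_I,
    Complex.ofReal_one, one_mul]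
  set e := Complex.exp (t * Complex.I)
  set d := deriv f (x * e)
  set w := conj (f (x * e))
  linear_combination (2 * x * d * conj d) * he +
    (e * w * d - e * d * x * conj e * conj d + e ^ 2 * w * x * deriv (deriv f) (x * e)) *
      Complex.I_sq

lemma integrableOn_divergence_dirichletField (hr : 0 ≤ r) (hU : IsOpen U)
    (hrU : closedBall 0 r ⊆ U) (hf : DifferentiableOn ℂ f U) :
    IntegrableOn (fun p : ℝ × ℝ => fderiv ℝ (dirichletFieldRadial f) p (1, 0) +
      fderiv ℝ (dirichletFieldAngular f) p (0, 1)) ([[0, r]] ×ˢ [[0, 2 * π]]) := by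
  have hS : ∀ p ∈ [[0, r]] ×ˢ [[0, 2 * π]], circleMap 0 p.1 p.2 ∈ U := fun p hp =>
    hrU (circleMap_mem_closedBall_of_mem_uIcc hr hp.1 p.2)
  refine IntegrableOn.congr_fun ?_ (fun p hp => (divergence_dirichletField hU hf (hS p hp)).symm)
    (measurableSet_uIcc.prod measurableSet_uIcc)
  refine ContinuousOn.integrableOn_compact (isCompact_uIcc.prod isCompact_uIcc) ?_
  refine Complex.continuous_ofReal.comp_continuousOn
    ((by fun_prop : Continuous fun p : ℝ × ℝ => 2 * p.1).continuousOn.mul ?_)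
  exact (((hf.analyticOnNhd hU).deriv.continuousOn.comp
    (differentiable_circleMap_uncurry 0).continuous.continuousOn hS).norm).pow 2

lemma integral_integral_two_mul_norm_deriv_sq_circleMap (hr : 0 ≤ r) (hU : IsOpen U)
    (hrU : closedBall 0 r ⊆ U) (hf : DifferentiableOn ℂ f U) :
    ∫ x in 0..r, ∫ t in 0..2 * π, ((2 * x * ‖deriv f (circleMap 0 x t)‖ ^ 2 : ℝ) : ℂ) =
      ∫ t in 0..2 * π, circleMap 0 r t * conjMulDeriv f (circleMap 0 r t) := by
  have hS : ∀ p ∈ [[0, r]] ×ˢ [[0, 2 * π]], circleMap 0 p.1 p.2 ∈ U := fun p hp =>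
    hrU (circleMap_mem_closedBall_of_mem_uIcc hr hp.1 p.2)
  have hinterior : ∀ p ∈ Ioo (min 0 r) (max 0 r) ×ˢ Ioo (min 0 (2 * π)) (max 0 (2 * π)) \ ∅,
      circleMap 0 p.1 p.2 ∈ U := fun p hp =>
    hS p ⟨Ioo_subset_Icc_self hp.1.1, Ioo_subset_Icc_self hp.1.2⟩
  have key := integral2_divergence_prod_of_hasFDerivAt_off_countable _ _ _ _ 0 0 r (2 * π) ∅
    countable_empty
    (fun p hp =>
      (differentiableAt_dirichletFieldRadial hU hf (hS p hp)).continuousAt.continuousWithinAt)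
    (fun p hp =>
      (differentiableAt_dirichletFieldAngular hU hf (hS p hp)).continuousAt.continuousWithinAt)
    (fun p hp => (differentiableAt_dirichletFieldRadial hU hf (hinterior p hp)).hasFDerivAt)
    (fun p hp => (differentiableAt_dirichletFieldAngular hU hf (hinterior p hp)).hasFDerivAt)
    (integrableOn_divergence_dirichletField hr hU hrU hf)
  have hQ (x : ℝ) : dirichletFieldAngular f (x, 2 * π) = dirichletFieldAngular f (x, 0) := by
    simp only [dirichletFieldAngular, (periodic_circleMap 0 1).eq, (periodic_circleMap 0 x).eq]
  have hP (t : ℝ) : dirichletFieldRadial f (0, t) = 0 := by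
    simp [dirichletFieldRadial, circleMap_zero_radius]
  simp only [hQ, hP, sub_self, zero_add, intervalIntegral.integral_zero, sub_zero] at key
  refine Eq.trans ?_ key
  refine intervalIntegral.integral_congr fun x hx => intervalIntegral.integral_congr fun t ht => ?_
  exact (divergence_dirichletField hU hf (hS (x, t) ⟨hx, ht⟩)).symm

theorem two_mul_integral_ball_norm_deriv_sq (hr : 0 ≤ r) (hU : IsOpen U)
    (hrU : closedBall 0 r ⊆ U) (hf : DifferentiableOn ℂ f U) :
    ((2 * ∫ z in ball (0 : ℂ) r, ‖deriv f z‖ ^ 2 : ℝ) : ℂ) =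
      ∫ t in 0..2 * π, circleMap 0 r t * conjMulDeriv f (circleMap 0 r t) := by
  have hf' : ContinuousOn (deriv f) (closedBall 0 r) :=
    (hf.analyticOnNhd hU).deriv.continuousOn.mono hrU
  rw [← integral_integral_two_mul_norm_deriv_sq_circleMap hr hU hrU hf,
    integral_ball_eq_intervalIntegral_circleMap (h := fun z => ‖deriv f z‖ ^ 2) hr
      (hf'.norm.pow 2),
    ← intervalIntegral.integral_const_mul, ← intervalIntegral.integral_ofReal]
  congr 1 with x
  rw [← intervalIntegral.integral_const_mul, ← intervalIntegral.integral_ofReal]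
  congr 1 with t
  rw [smul_eq_mul, mul_assoc]

lemma intervalIntegrable_circleMap_mul_conjMulDeriv (hr : 0 ≤ r) (hU : IsOpen U)
    (hrU : closedBall 0 r ⊆ U) (hf : DifferentiableOn ℂ f U) :
    IntervalIntegrable (fun t => circleMap 0 r t * conjMulDeriv f (circleMap 0 r t)) volume
      0 (2 * π) :=
  ((continuous_circleMap 0 r).continuousOn.mul ((continuousOn_conjMulDeriv hU hf).comp
    (continuous_circleMap 0 r).continuousOn
    fun t _ => hrU (circleMap_mem_closedBall 0 hr t))).intervalIntegrable

lemma conjMulDeriv_mul_of_norm_eq_one {b g : ℂ → ℂ} (hb : DifferentiableAt ℂ b z)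
    (hg : DifferentiableAt ℂ g z) (hbz : ‖b z‖ = 1) :
    conjMulDeriv (fun w => b w * g w) z = conjMulDeriv g z + ‖g z‖ ^ 2 * logDeriv b z := by
  have hb0 : b z ≠ 0 := norm_ne_zero_iff.1 (by simp [hbz])
  have hbb : conj (b z) * b z = 1 := by simp [Complex.conj_mul', hbz]
  rw [conjMulDeriv, conjMulDeriv, deriv_fun_mul hb hg, logDeriv_apply, map_mul,
    ← Complex.conj_mul']
  field_simp
  linear_combination (conj (g z) * (b z * deriv g z + deriv b z * g z)) * hbb

end DirichletIntegral

noncomputable def blaschkeFactor (a z : ℂ) : ℂ := (z - a) / (1 - conj a * z)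

noncomputable def blaschkeProduct {ι : Type*} (s : Finset ι) (α : ι → ℂ) (z : ℂ) : ℂ :=
  ∏ i ∈ s, blaschkeFactor (α i) z

section Blaschke

variable {a w : ℂ} {ι : Type*} {s : Finset ι} {α : ι → ℂ}

lemma one_sub_conj_mul_eq_mul_conj_sub (hw : ‖w‖ = 1) : 1 - conj a * w = w * conj (w - a) := by
  have : w * conj w = 1 := by simp [Complex.mul_conj', hw]
  rw [map_sub]
  linear_combination -this

lemma sub_ne_zero_of_norm_lt_of_norm_eq_one (ha : ‖a‖ < 1) (hw : ‖w‖ = 1) : w - a ≠ 0 :=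
  sub_ne_zero.2 fun h => ha.ne (h ▸ hw)

lemma one_sub_conj_mul_ne_zero (ha : ‖a‖ < 1) (hw : ‖w‖ ≤ 1) : 1 - conj a * w ≠ 0 := by
  refine sub_ne_zero.2 fun h => ?_
  have : ‖conj a * w‖ < 1 := by
    rw [norm_mul, Complex.norm_conj]
    exact mul_lt_one_of_nonneg_of_lt_one_left (norm_nonneg a) ha hw
  rw [← h, norm_one] at this
  exact lt_irrefl _ this

lemma hasDerivAt_blaschkeFactor (h : 1 - conj a * w ≠ 0) :
    HasDerivAt (blaschkeFactor a) ((1 - ‖a‖ ^ 2) / (1 - conj a * w) ^ 2) w := by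
  have hnum : HasDerivAt (fun z : ℂ => z - a) 1 w := (hasDerivAt_id w).sub_const a
  have hden : HasDerivAt (fun z : ℂ => 1 - conj a * z) (-conj a) w := by
    simpa using ((hasDerivAt_id w).const_mul (conj a)).const_sub 1
  refine (hnum.div hden h).congr_deriv ?_
  rw [← Complex.conj_mul']
  ring

lemma norm_blaschkeFactor (ha : ‖a‖ < 1) (hw : ‖w‖ = 1) : ‖blaschkeFactor a w‖ = 1 := by
  rw [blaschkeFactor, one_sub_conj_mul_eq_mul_conj_sub hw, norm_div, norm_mul, hw,
    Complex.norm_conj, one_mul,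
    div_self (norm_ne_zero_iff.2 (sub_ne_zero_of_norm_lt_of_norm_eq_one ha hw))]

lemma mul_logDeriv_blaschkeFactor (ha : ‖a‖ < 1) (hw : ‖w‖ = 1) :
    w * logDeriv (blaschkeFactor a) w = (((1 - ‖a‖ ^ 2) / ‖w - a‖ ^ 2 : ℝ) : ℂ) := by
  have hsub := sub_ne_zero_of_norm_lt_of_norm_eq_one ha hw
  have hden := one_sub_conj_mul_ne_zero ha hw.le
  have hw0 : w ≠ 0 := norm_ne_zero_iff.1 (by simp [hw])
  push_cast
  rw [logDeriv_apply, (hasDerivAt_blaschkeFactor hden).deriv, blaschkeFactor,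
    ← Complex.mul_conj', ← Complex.mul_conj' (w - a), one_sub_conj_mul_eq_mul_conj_sub hw]
  rw [one_sub_conj_mul_eq_mul_conj_sub hw] at hden
  field_simp

lemma isOpen_setOf_one_sub_conj_mul_ne_zero :
    IsOpen {z : ℂ | ∀ i ∈ s, 1 - conj (α i) * z ≠ 0} := by
  simp only [ofPred_forall]
  exact isOpen_biInter_finset fun i _ => isOpen_ne_fun (by fun_prop) continuous_const

lemma closedBall_subset_setOf_one_sub_conj_mul_ne_zero (hα : ∀ i ∈ s, ‖α i‖ < 1) :
    closedBall 0 1 ⊆ {z : ℂ | ∀ i ∈ s, 1 - conj (α i) * z ≠ 0} := fun _ hz i hi =>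
  one_sub_conj_mul_ne_zero (hα i hi) (mem_closedBall_zero_iff.1 hz)

lemma differentiableOn_blaschkeProduct :
    DifferentiableOn ℂ (blaschkeProduct s α) {z | ∀ i ∈ s, 1 - conj (α i) * z ≠ 0} :=
  fun _ hz => (DifferentiableAt.fun_finsetProd fun i hi =>
    (hasDerivAt_blaschkeFactor (hz i hi)).differentiableAt).differentiableWithinAt

lemma norm_blaschkeProduct (hα : ∀ i ∈ s, ‖α i‖ < 1) (hw : ‖w‖ = 1) :
    ‖blaschkeProduct s α w‖ = 1 := by
  rw [blaschkeProduct, norm_prod]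
  exact Finset.prod_eq_one fun i hi => norm_blaschkeFactor (hα i hi) hw

lemma mul_logDeriv_blaschkeProduct (hα : ∀ i ∈ s, ‖α i‖ < 1) (hw : ‖w‖ = 1) :
    w * logDeriv (blaschkeProduct s α) w =
      ((∑ i ∈ s, (1 - ‖α i‖ ^ 2) / ‖w - α i‖ ^ 2 : ℝ) : ℂ) := by
  unfold blaschkeProduct
  rw [logDeriv_prod
      (fun i hi => norm_ne_zero_iff.1 (by simp [norm_blaschkeFactor (hα i hi) hw]))
      (fun i hi => (hasDerivAt_blaschkeFactor
        (one_sub_conj_mul_ne_zero (hα i hi) hw.le)).differentiableAt),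
    Finset.mul_sum, Complex.ofReal_sum]
  exact Finset.sum_congr rfl fun i hi => mul_logDeriv_blaschkeFactor (hα i hi) hw

lemma mul_conjMulDeriv_blaschkeProduct_mul_sub (hα : ∀ i ∈ s, ‖α i‖ < 1) {g : ℂ → ℂ}
    (hw : ‖w‖ = 1) (hg : DifferentiableAt ℂ g w) :
    w * conjMulDeriv (fun z => blaschkeProduct s α z * g z) w - w * conjMulDeriv g w =
      ((‖g w‖ ^ 2 * ∑ i ∈ s, (1 - ‖α i‖ ^ 2) / ‖w - α i‖ ^ 2 : ℝ) : ℂ) := by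
  have hb : DifferentiableAt ℂ (blaschkeProduct s α) w :=
    differentiableOn_blaschkeProduct.differentiableAt
      (isOpen_setOf_one_sub_conj_mul_ne_zero.mem_nhds
        (closedBall_subset_setOf_one_sub_conj_mul_ne_zero hα (by simp [hw])))
  rw [conjMulDeriv_mul_of_norm_eq_one hb hg (norm_blaschkeProduct hα hw), mul_add,
    add_sub_cancel_left, Complex.ofReal_mul, ← mul_logDeriv_blaschkeProduct hα hw]
  push_cast
  ring

theorem integral_ball_norm_deriv_blaschkeProduct_mul_sq (hα : ∀ i ∈ s, ‖α i‖ < 1)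
    {g : ℂ → ℂ} {U : Set ℂ} (hU : IsOpen U) (hUc : closedBall 0 1 ⊆ U)
    (hg : DifferentiableOn ℂ g U) :
    ∫ z in ball (0 : ℂ) 1, ‖deriv (fun z => blaschkeProduct s α z * g z) z‖ ^ 2 =
      (∫ z in ball (0 : ℂ) 1, ‖deriv g z‖ ^ 2) + 1 / 2 * ∫ t in 0..2 * π,
        ‖g (circleMap 0 1 t)‖ ^ 2 * ∑ i ∈ s, (1 - ‖α i‖ ^ 2) / ‖circleMap 0 1 t - α i‖ ^ 2 := by
  set V := U ∩ {z | ∀ i ∈ s, 1 - conj (α i) * z ≠ 0}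
  have hV : IsOpen V := hU.inter isOpen_setOf_one_sub_conj_mul_ne_zero
  have hVc : closedBall 0 1 ⊆ V :=
    subset_inter hUc (closedBall_subset_setOf_one_sub_conj_mul_ne_zero hα)
  have hgV : DifferentiableOn ℂ g V := hg.mono inter_subset_left
  have hFV : DifferentiableOn ℂ (fun z => blaschkeProduct s α z * g z) V :=
    (differentiableOn_blaschkeProduct.mono inter_subset_right).mul hgV
  have key : 2 * (∫ z in ball (0 : ℂ) 1, ‖deriv (fun z => blaschkeProduct s α z * g z) z‖ ^ 2) -
      2 * (∫ z in ball (0 : ℂ) 1, ‖deriv g z‖ ^ 2) = ∫ t in 0..2 * π,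
        ‖g (circleMap 0 1 t)‖ ^ 2 * ∑ i ∈ s, (1 - ‖α i‖ ^ 2) / ‖circleMap 0 1 t - α i‖ ^ 2 := by
    apply Complex.ofReal_injective
    rw [Complex.ofReal_sub, two_mul_integral_ball_norm_deriv_sq zero_le_one hV hVc hFV,
      two_mul_integral_ball_norm_deriv_sq zero_le_one hV hVc hgV,
      ← intervalIntegral.integral_sub
        (intervalIntegrable_circleMap_mul_conjMulDeriv zero_le_one hV hVc hFV)
        (intervalIntegrable_circleMap_mul_conjMulDeriv zero_le_one hV hVc hgV),
      ← intervalIntegral.integral_ofReal]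
    refine intervalIntegral.integral_congr fun t _ => ?_
    have hz : circleMap 0 1 t ∈ V := hVc (circleMap_mem_closedBall 0 zero_le_one t)
    exact mul_conjMulDeriv_blaschkeProduct_mul_sub hα (by simp)
      ((hgV _ hz).differentiableAt (hV.mem_nhds hz))
  linarith

end Blaschke

theorem carleson_formula_general (J : ℕ) (α : Fin J → ℂ) (hα : ∀ j, ‖α j‖ < 1)
    (G : ℂ → ℂ) (U : Set ℂ) (hU : IsOpen U) (hUc : Metric.closedBall (0:ℂ) 1 ⊆ U)
    (hG : DifferentiableOn ℂ G U)
    (B F : ℂ → ℂ)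
    (hB : ∀ z, B z = ∏ j, (z - α j) / (1 - (starRingEnd ℂ) (α j) * z))
    (hF : ∀ z, F z = B z * G z) :
    (∫ z in Metric.ball (0:ℂ) 1, ‖deriv F z‖ ^ 2) =
      (∫ z in Metric.ball (0:ℂ) 1, ‖deriv G z‖ ^ 2) +
        (1 / 2) * ∫ t in (0:ℝ)..(2 * π),
          ‖G (Complex.exp (Complex.I * t))‖ ^ 2 *
            ∑ j, (1 - ‖α j‖ ^ 2) / ‖Complex.exp (Complex.I * t) - α j‖ ^ 2 := by
  have hFB : F = fun z => blaschkeProduct Finset.univ α z * G z :=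
    funext fun z => by rw [hF, hB]; rfl
  have hcirc (t : ℝ) : circleMap 0 1 t = Complex.exp (Complex.I * t) := by
    rw [circleMap_zero, Complex.ofReal_one, one_mul, mul_comm]
  rw [hFB, integral_ball_norm_deriv_blaschkeProduct_mul_sq (fun j _ => hα j) hU hUc hG]
  simp only [hcirc]

/-- Special case of Carleson's formula: for `F = B·G` with `B` a finite Blaschke product with
zeros `α₁,…,α_J` in the open unit disk and `G` holomorphic and zero-free on a neighborhood of
the closed unit disk, the Dirichlet integral of `F` equals that of `G` plus the boundary
correction term. -/
theorem carleson_formula (J : ℕ) (hJ : 1 ≤ J) (α : Fin J → ℂ) (hα : ∀ j, ‖α j‖ < 1)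
    (G : ℂ → ℂ) (U : Set ℂ) (hU : IsOpen U) (hUc : Metric.closedBall (0:ℂ) 1 ⊆ U)
    (hG : DifferentiableOn ℂ G U) (hGne : ∀ z : ℂ, ‖z‖ ≤ 1 → G z ≠ 0)
    (B F : ℂ → ℂ)
    (hB : ∀ z, B z = ∏ j, (z - α j) / (1 - (starRingEnd ℂ) (α j) * z))
    (hF : ∀ z, F z = B z * G z) :
    (∫ z in Metric.ball (0:ℂ) 1, ‖deriv F z‖ ^ 2) =
      (∫ z in Metric.ball (0:ℂ) 1, ‖deriv G z‖ ^ 2) +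
        (1 / 2) * ∫ t in (0:ℝ)..(2 * π),
          ‖G (Complex.exp (Complex.I * t))‖ ^ 2 *
            ∑ j, (1 - ‖α j‖ ^ 2) / ‖Complex.exp (Complex.I * t) - α j‖ ^ 2 :=
  carleson_formula_general J α hα G U hU hUc hG B F hB hF
end

section
/- Let n ≥ 2 be an integer and F(z) = 2z + zⁿ. Then the only zero of F in the closed unit disk is z = 0, and ∫_𝔻 |F′(z)|² dA(z) = (n + 4)π, where dA is two-dimensional Lebesgue measure on the open unit disk 𝔻 ⊂ ℂ. -/
/-!
The cross term `2 Re (conj a · b zᵏ)` of `‖a + b zᵏ‖²` integrates to zero over the disk, because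
rotating by a `2k`-th root of `-1` preserves the disk and Lebesgue measure but negates `zᵏ`. What
is left are the integrals of the constant `‖a‖²` and of the radial function `‖b‖² ‖z‖²ᵏ`. For
`F = 2z + zⁿ` one has `F' = 2 + n zⁿ⁻¹`, which gives `π (4 + n² / n) = (n + 4) π`. The zero set
is read off from `F z = z (2 + zⁿ⁻¹)` with `‖zⁿ⁻¹‖ ≤ 1 < 2` on the closed disk.
-/

open Real MeasureTheory Metric

theorem Continuous.integrableOn_ball {X E : Type*} [MetricSpace X] [ProperSpace X]
    [MeasurableSpace X] [OpensMeasurableSpace X] [NormedAddCommGroup E] {μ : Measure X}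
    [IsFiniteMeasureOnCompacts μ] {f : X → E} (hf : Continuous f) (x : X) (r : ℝ) :
    IntegrableOn f (ball x r) μ :=
  (hf.continuousOn.integrableOn_compact (isCompact_closedBall x r)).mono_set ball_subset_closedBall

lemma Complex.volume_real_ball_one (a : ℂ) : volume.real (ball a 1) = π := by
  simp [measureReal_def]

lemma setIntegral_ball_pow_eq_zero {k : ℕ} (hk : k ≠ 0) (r : ℝ) :
    ∫ z in ball (0 : ℂ) r, z ^ k = 0 := by
  set ω : Circle := Circle.exp (π / k)
  have hω : (ω : ℂ) ^ k = -1 := by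
    rw [Circle.coe_exp, ← Complex.exp_nat_mul, ← Complex.exp_pi_mul_I]
    congr 1
    push_cast
    field_simp
  have hrot := (rotation ω).measurePreserving.setIntegral_preimage_emb
    (rotation ω).toHomeomorph.measurableEmbedding (fun z => z ^ k) (ball 0 r)
  simp only [LinearIsometryEquiv.preimage_ball, map_zero, rotation_apply, mul_pow, hω,
    neg_one_mul, integral_neg] at hrot
  exact self_eq_neg.mp hrot.symm

lemma setIntegral_ball_norm_pow (k : ℕ) :
    ∫ z in ball (0 : ℂ) 1, ‖z‖ ^ k = 2 * π / (k + 2) := by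
  have hradial : (ball (0 : ℂ) 1).indicator (fun z => ‖z‖ ^ k) =
      fun z => (Set.Iio (1 : ℝ)).indicator (fun y => y ^ k) ‖z‖ := by
    ext z
    simp [Set.indicator]
  have hpolar : (fun y : ℝ => y * (Set.Iio 1).indicator (fun y => y ^ k) y) =
      (Set.Iio 1).indicator (fun y => y ^ (k + 1)) := by
    ext y
    simp [Set.indicator_apply, pow_succ']
  have hinterval : ∫ y in Set.Ioi (0 : ℝ), (Set.Iio 1).indicator (fun y => y ^ (k + 1)) y =
      1 / (k + 2) := by
    rw [setIntegral_indicator measurableSet_Iio, Set.Ioi_inter_Iio,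
      ← integral_Ioc_eq_integral_Ioo, ← intervalIntegral.integral_of_le zero_le_one, integral_pow]
    push_cast
    ring
  rw [← integral_indicator measurableSet_ball, hradial, integral_fun_norm_addHaar,
    Complex.finrank_real_complex]
  simp only [Nat.add_one_sub_one, pow_one, smul_eq_mul]
  rw [hpolar, hinterval, Complex.volume_real_ball_one]
  ring

lemma setIntegral_ball_norm_const_add_mul_pow_sq (a b : ℂ) {k : ℕ} (hk : k ≠ 0) :
    ∫ z in ball (0 : ℂ) 1, ‖a + b * z ^ k‖ ^ 2 = π * (‖a‖ ^ 2 + ‖b‖ ^ 2 / (k + 1)) := by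
  have hexpand : ∀ z : ℂ, ‖a + b * z ^ k‖ ^ 2 =
      ‖a‖ ^ 2 + ‖b‖ ^ 2 * ‖z‖ ^ (2 * k) + 2 * (starRingEnd ℂ a * b * z ^ k).re := by
    intro z
    rw [add_comm, Complex.sq_norm, Complex.normSq_add, ← Complex.sq_norm, ← Complex.sq_norm,
      norm_mul, norm_pow]
    ring_nf
  have hcross : ∫ z in ball (0 : ℂ) 1, (starRingEnd ℂ a * b * z ^ k).re = 0 := by
    have := integral_re (((continuous_pow k).const_mul (starRingEnd ℂ a * b)).integrableOn_ball
      (μ := volume) 0 1)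
    rw [integral_const_mul, setIntegral_ball_pow_eq_zero hk, mul_zero] at this
    simpa [mul_assoc] using this
  simp_rw [hexpand]
  rw [integral_add, integral_add, setIntegral_const, integral_const_mul, integral_const_mul, hcross,
    setIntegral_ball_norm_pow]
  · rw [smul_eq_mul, Complex.volume_real_ball_one]
    push_cast
    field_simp
    ring
  all_goals exact Continuous.integrableOn_ball (by fun_prop) 0 1

lemma mul_add_pow_eq_zero_iff {𝕜 : Type*} [NormedField 𝕜] {c z : 𝕜} {n : ℕ} (hn : n ≠ 0)
    (hc : 1 < ‖c‖) (hz : ‖z‖ ≤ 1) : c * z + z ^ n = 0 ↔ z = 0 := by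
  obtain ⟨m, rfl⟩ := Nat.exists_eq_succ_of_ne_zero hn
  have hfactor : c + z ^ m ≠ 0 := by
    intro h
    have : ‖c‖ = ‖z‖ ^ m := by rw [eq_neg_of_add_eq_zero_left h, norm_neg, norm_pow]
    linarith [pow_le_one₀ (n := m) (norm_nonneg z) hz]
  rw [show c * z + z ^ (m + 1) = z * (c + z ^ m) by ring, mul_eq_zero, or_iff_left hfactor]

/-- For `F(z) = 2z + zⁿ`, `n ≥ 2`: the only zero of `F` in the closed unit disk is `z = 0`,
and the Dirichlet integral of `F` over the unit disk equals `(n+4)π`. -/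
theorem dirichlet_energy_two_z_plus_zn (n : ℕ) (hn : 2 ≤ n) (F : ℂ → ℂ)
    (hF : ∀ z, F z = 2 * z + z ^ n) :
    (∀ z : ℂ, ‖z‖ ≤ 1 → (F z = 0 ↔ z = 0)) ∧
      (∫ z in Metric.ball (0:ℂ) 1, ‖deriv F z‖ ^ 2) = (n + 4) * π := by
  refine ⟨fun z hz => hF z ▸ mul_add_pow_eq_zero_iff (by omega) (by norm_num) hz, ?_⟩
  have hderiv : deriv F = fun z => 2 + (n : ℂ) * z ^ (n - 1) := by
    funext z
    have hpoly := ((hasDerivAt_id z).const_mul 2).add (hasDerivAt_pow n z)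
    rw [mul_one] at hpoly
    exact (hpoly.congr_of_eventuallyEq (.of_forall hF)).deriv
  have hcast : ((n - 1 : ℕ) : ℝ) + 1 = n := by
    rw [Nat.cast_sub (by omega)]
    ring
  rw [hderiv, setIntegral_ball_norm_const_add_mul_pow_sq 2 n (by omega), hcast]
  norm_num
  field_simp
  ring
end

section
/- Let 0 ≤ n₀ < n₁ < n₂ < … be a strictly increasing sequence of integers and let (a_k)_{k≥0} be complex numbers such that Σ_{k≥0} |a_k| < ∞ and, for every N ≥ 0, |a_N| > Σ_{k=N+1}^{∞} |a_k|. Then for every N ≥ 0 and every complex z with |z| ≤ 1, Σ_{k=N}^{∞} a_k z^{n_k − n_N} ≠ 0. Consequently, the tail function z ↦ Σ_{k=N}^{∞} a_k z^{n_k} factors as z^{n_N} · h_N(z) where h_N(z) = Σ_{k=N}^{∞} a_k z^{n_k − n_N} is nonvanishing on the closed unit disk; i.e., all zeros of the tail in the closed unit disk lie at the origin. -/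
open Real

/-- Under the coefficient domination condition `|a_N| > Σ_{k>N} |a_k|`, every tail
`Σ_{k≥N} a_k z^{n_k}` of the lacunary-type series has all its zeros in the closed unit
disk at the origin: the factor `h_N(z) = Σ_{k≥N} a_k z^{n_k - n_N}` never vanishes for
`|z| ≤ 1`, and the tail factors as `z^{n_N} · h_N(z)`. -/
theorem unwinding_tail_nonvanishing (n : ℕ → ℕ) (hn : StrictMono n) (a : ℕ → ℂ)
    (hsum : Summable fun k => ‖a k‖)
    (hdom : ∀ N : ℕ, (∑' k : ℕ, ‖a (N + 1 + k)‖) < ‖a N‖) :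
    ∀ N : ℕ, ∀ z : ℂ, ‖z‖ ≤ 1 →
      (∑' k : ℕ, a (N + k) * z ^ (n (N + k) - n N)) ≠ 0 ∧
      (∑' k : ℕ, a (N + k) * z ^ n (N + k)) =
        z ^ n N * ∑' k : ℕ, a (N + k) * z ^ (n (N + k) - n N) := by
  intro N z hz
  have hznorm : ∀ m : ℕ, ‖z ^ m‖ ≤ 1 := fun m => by
    rw [norm_pow]; exact pow_le_one₀ (norm_nonneg z) hz
  have hbound : ∀ (M : ℕ) (e : ℕ → ℕ), ∀ k : ℕ,
      ‖a (M + k) * z ^ e k‖ ≤ ‖a (M + k)‖ := fun M e k => by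
    rw [norm_mul]
    calc ‖a (M + k)‖ * ‖z ^ e k‖ ≤ ‖a (M + k)‖ * 1 :=
          mul_le_mul_of_nonneg_left (hznorm _) (norm_nonneg _)
      _ = ‖a (M + k)‖ := mul_one _
  have hsumM : ∀ M : ℕ, Summable fun k => ‖a (M + k)‖ :=
    fun M => (by simpa [Nat.add_comm] using (summable_nat_add_iff M).mpr hsum)
  have hS : ∀ (M : ℕ) (e : ℕ → ℕ), Summable fun k => a (M + k) * z ^ e k := fun M e =>
    Summable.of_norm <| Summable.of_nonneg_of_le (fun k => norm_nonneg _)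
      (hbound M e) (hsumM M)
  -- first part
  have hne : (∑' k : ℕ, a (N + k) * z ^ (n (N + k) - n N)) ≠ 0 := by
    have hsplit : (∑' k : ℕ, a (N + k) * z ^ (n (N + k) - n N)) =
        a N + ∑' k : ℕ, a (N + 1 + k) * z ^ (n (N + 1 + k) - n N) := by
      rw [Summable.tsum_eq_zero_add (hS N _)]
      congr 1
      · simp
      · refine tsum_congr fun k => ?_
        have : N + (k + 1) = N + 1 + k := by omega
        rw [this]
    intro h
    rw [hsplit] at h
    have htail : ‖∑' k : ℕ, a (N + 1 + k) * z ^ (n (N + 1 + k) - n N)‖ < ‖a N‖ := by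
      calc ‖∑' k : ℕ, a (N + 1 + k) * z ^ (n (N + 1 + k) - n N)‖
          ≤ ∑' k : ℕ, ‖a (N + 1 + k) * z ^ (n (N + 1 + k) - n N)‖ :=
            norm_tsum_le_tsum_norm ((hS (N + 1) _).norm)
        _ ≤ ∑' k : ℕ, ‖a (N + 1 + k)‖ :=
            Summable.tsum_le_tsum (hbound (N + 1) _) ((hS (N + 1) _).norm) (hsumM (N + 1))
        _ < ‖a N‖ := hdom N
    have : a N = -∑' k : ℕ, a (N + 1 + k) * z ^ (n (N + 1 + k) - n N) := by
      linear_combination h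
    rw [this, norm_neg] at htail
    exact lt_irrefl _ htail
  refine ⟨hne, ?_⟩
  rw [← tsum_mul_left]
  refine tsum_congr fun k => ?_
  have hle : n N ≤ n (N + k) := hn.monotone (Nat.le_add_right N k)
  rw [← mul_assoc, mul_comm (z ^ n N) (a (N + k)), mul_assoc, ← pow_add,
    Nat.add_sub_cancel' hle]
end
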